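/- arXiv:2001.08970 — 3 statements merged into one kernel-verified Lean document; each statement's English description precedes it below -/
import Mathlib

section
/- Fix positive constants m_1, …, m_N and v̄_1, …, v̄_N and set v_i := v̄_i/m_i. Let F : (0, ∞) → ℝ be twice continuously differentiable with F″(t) > 0 for all t > 0. Let ρ ∈ ℝ^N_+ and set n_i := ρ_i/m_i and n := Σ_{j=1}^N n_j. Then for every ξ ∈ ℝ^N with ξ ≠ 0 one has F″(v·ρ)·(v·ξ)² + Σ_{i=1}^N ξ_i²/(n_i·m_i²) − (1/n)·(Σ_{i=1}^N ξ_i/m_i)² > 0, where v·ρ = Σ_i v_i ρ_i and v·ξ = Σ_i v_i ξ_i. -/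
/-!
Writing `n_i = ρ_i / m_i` and `x_i = ξ_i / m_i`, the last two terms are
`Σ x_i² / n_i - (Σ x_i)² / Σ n_i`, which is the `n`-weighted variance
`Σ n_i (x_i / n_i - λ)²` with `λ = Σ x_i / Σ n_i`. It is nonnegative and vanishes only when
`x` is proportional to `n`, i.e. `ξ_i = λ n_i m_i`. In that case `λ ≠ 0` because `ξ ≠ 0`, so
`v·ξ = λ Σ v̄_i n_i ≠ 0` and the term `F''(v·ρ)(v·ξ)²` is positive.
-/

open Finset

section WeightedVariance

variable {ι R : Type*} [Field R] (s : Finset ι) (x w : ι → R)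

theorem sum_sq_div_sub_sq_sum_div_eq_sum_mul_sq (hw : ∀ i ∈ s, w i ≠ 0)
    (hs : ∑ i ∈ s, w i ≠ 0) :
    ∑ i ∈ s, x i ^ 2 / w i - (∑ i ∈ s, x i) ^ 2 / ∑ i ∈ s, w i
      = ∑ i ∈ s, w i * (x i / w i - (∑ j ∈ s, x j) / ∑ j ∈ s, w j) ^ 2 := by
  set c := (∑ j ∈ s, x j) / ∑ j ∈ s, w j
  have expand : ∀ i ∈ s,
      w i * (x i / w i - c) ^ 2 = x i ^ 2 / w i - 2 * c * x i + c ^ 2 * w i := by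
    intro i hi
    field_simp [hw i hi]
    ring
  rw [sum_congr rfl expand, sum_add_distrib, sum_sub_distrib, ← mul_sum, ← mul_sum]
  simp only [c]
  field_simp
  ring

variable [LinearOrder R] [IsStrictOrderedRing R]

theorem sq_sum_div_lt_sum_sq_div (hw : ∀ i ∈ s, 0 < w i)
    (hx : ¬∃ c, ∀ i ∈ s, x i = c * w i) :
    (∑ i ∈ s, x i) ^ 2 / ∑ i ∈ s, w i < ∑ i ∈ s, x i ^ 2 / w i := by
  have hs : s.Nonempty := by
    by_contra h
    exact hx ⟨0, by simp [not_nonempty_iff_eq_empty.mp h]⟩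
  set c := (∑ j ∈ s, x j) / ∑ j ∈ s, w j
  obtain ⟨i, hi, hxi⟩ : ∃ i ∈ s, x i / w i - c ≠ 0 := by
    by_contra! h
    exact hx ⟨c, fun i hi => by rw [← sub_eq_zero.mp (h i hi), div_mul_cancel₀ _ (hw i hi).ne']⟩
  rw [← sub_pos, sum_sq_div_sub_sq_sum_div_eq_sum_mul_sq s x w (fun i hi => (hw i hi).ne')
    (sum_pos hw hs).ne']
  exact sum_pos' (fun j hj => mul_nonneg (hw j hj).le (sq_nonneg _))
    ⟨i, hi, mul_pos (hw i hi) (sq_pos_of_ne_zero hxi)⟩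

end WeightedVariance

theorem hessian_quadratic_form_pos_general
    (N : ℕ) (m vbar : Fin N → ℝ)
    (hm : ∀ i, 0 < m i) (hv : ∀ i, 0 < vbar i)
    (F : ℝ → ℝ)
    (hF'' : ∀ t : ℝ, 0 < t → 0 < deriv (deriv F) t)
    (ρ : Fin N → ℝ) (hρ : ∀ i, 0 < ρ i)
    (ξ : Fin N → ℝ) (hξ : ξ ≠ 0) :
    0 < deriv (deriv F) (∑ i, (vbar i / m i) * ρ i) * (∑ i, (vbar i / m i) * ξ i) ^ 2
        + ∑ i, (ξ i) ^ 2 / ((ρ i / m i) * (m i) ^ 2)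
        - (1 / ∑ j, ρ j / m j) * (∑ i, ξ i / m i) ^ 2 := by
  have : Nonempty (Fin N) := let ⟨i, _⟩ := Function.ne_iff.mp hξ; ⟨i⟩
  set n : Fin N → ℝ := fun i => ρ i / m i
  set x : Fin N → ℝ := fun i => ξ i / m i
  have hn : ∀ i ∈ univ, 0 < n i := fun i _ => div_pos (hρ i) (hm i)
  have hquad : ∑ i, ξ i ^ 2 / (n i * m i ^ 2) = ∑ i, x i ^ 2 / n i :=
    sum_congr rfl fun i _ => by simp only [n, x]; field_simp [(hm i).ne']
  have hF2 : 0 < deriv (deriv F) (∑ i, vbar i / m i * ρ i) :=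
    hF'' _ (sum_pos (fun i _ => mul_pos (div_pos (hv i) (hm i)) (hρ i)) univ_nonempty)
  rw [hquad, one_div_mul_eq_div, add_sub_assoc]
  by_cases hprop : ∃ c, ∀ i ∈ univ, x i = c * n i
  · obtain ⟨c, hc⟩ := hprop
    have hc0 : c ≠ 0 := by
      rintro rfl
      exact hξ (funext fun i => by simpa [x, (hm i).ne'] using hc i (mem_univ i))
    have hvξ : ∑ i, vbar i / m i * ξ i = c * ∑ i, vbar i * n i := by
      rw [mul_sum]
      refine sum_congr rfl fun i hi => ?_
      rw [mul_left_comm, ← hc i hi]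
      simp only [x]
      field_simp [(hm i).ne']
    have hvn : 0 < ∑ i, vbar i * n i :=
      sum_pos (fun i hi => mul_pos (hv i) (hn i hi)) univ_nonempty
    rw [hvξ]
    exact add_pos_of_pos_of_nonneg (by positivity)
      (sub_nonneg.mpr (sq_sum_div_le_sum_sq_div univ x hn))
  · exact add_pos_of_nonneg_of_pos (by positivity)
      (sub_pos.mpr (sq_sum_div_lt_sum_sq_div univ x n hn hprop))

/-- Positivity of the Hessian quadratic form of the free energy
`h(ρ) = F(Σ_i v_i ρ_i) + Σ_i n_i ln(n_i/n)` (with `v_i = v̄_i/m_i`, `n_i = ρ_i/m_i`,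
`n = Σ_j n_j`): if `F` is `C²` on `(0,∞)` with `F'' > 0`, then for every `ρ` in the open
positive orthant and every `ξ ≠ 0`,
`F''(v·ρ)(v·ξ)² + Σ_i ξ_i²/(n_i m_i²) − (1/n)(Σ_i ξ_i/m_i)² > 0`. -/
theorem hessian_quadratic_form_pos
    (N : ℕ) (hN : 1 ≤ N) (m vbar : Fin N → ℝ)
    (hm : ∀ i, 0 < m i) (hv : ∀ i, 0 < vbar i)
    (F : ℝ → ℝ) (hF : ContDiffOn ℝ 2 F (Set.Ioi 0))
    (hF'' : ∀ t : ℝ, 0 < t → 0 < deriv (deriv F) t)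
    (ρ : Fin N → ℝ) (hρ : ∀ i, 0 < ρ i)
    (ξ : Fin N → ℝ) (hξ : ξ ≠ 0) :
    0 < deriv (deriv F) (∑ i, (vbar i / m i) * ρ i) * (∑ i, (vbar i / m i) * ξ i) ^ 2
        + ∑ i, (ξ i) ^ 2 / ((ρ i / m i) * (m i) ^ 2)
        - (1 / ∑ j, ρ j / m j) * (∑ i, ξ i / m i) ^ 2 :=
  hessian_quadratic_form_pos_general N m vbar hm hv F hF'' ρ hρ ξ hξ
end

section
/- Fix positive constants m_1, …, m_N and v̄_1, …, v̄_N and set v_i := v̄_i/m_i. Let F : (0, ∞) → ℝ be twice continuously differentiable with F″(t) > 0 for all t > 0. Then the function h defined on the open positive orthant ℝ^N_+ by h(ρ) := F(Σ_{i=1}^N v_i ρ_i) + Σ_{i=1}^N n_i·ln(n_i/n), where n_i := ρ_i/m_i and n := Σ_j n_j, is strictly convex on ℝ^N_+. -/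
/-!
Write `h = G ∘ D`, where `D ρ = (ρᵢ / mᵢ)ᵢ` is an injective linear map preserving the positive
orthant and `G n = F (v̄ ⬝ᵥ n) + Σᵢ nᵢ log (nᵢ / Σⱼ nⱼ)`. Each summand of the mixing entropy is the
perspective `(a, b) ↦ b f (a / b)` of the strictly convex `f x = x log x`, evaluated at
`(nᵢ, Σⱼ nⱼ)`; perspectives of convex functions are jointly convex, strictly so between points
with different ratios `a / b`. Hence the mixing entropy is convex, and strictly convex along any
segment whose endpoints are not proportional. The term `F (v̄ ⬝ᵥ n)` is convex, and strictly so
when `v̄ ⬝ᵥ n` differs at the endpoints. Proportional endpoints `n = k n'` with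
`v̄ ⬝ᵥ n = v̄ ⬝ᵥ n' > 0` have `k = 1`.
-/

open Real Set Finset

theorem convex_setOf_forall_pos (ι : Type*) : Convex ℝ {u : ι → ℝ | ∀ i, 0 < u i} := by
  simpa only [Set.pi, Set.mem_univ, true_imp_iff, Set.mem_Ioi] using
    convex_pi (s := Set.univ) fun (_ : ι) _ => convex_Ioi (0 : ℝ)

theorem StrictConvexOn.comp_linearMap_of_injective {𝕜 E F β : Type*} [Semiring 𝕜]
    [PartialOrder 𝕜] [AddCommMonoid E] [AddCommMonoid F] [AddCommMonoid β] [PartialOrder β]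
    [Module 𝕜 E] [Module 𝕜 F] [SMul 𝕜 β] {f : F → β} {s : Set F} (hf : StrictConvexOn 𝕜 s f)
    (g : E →ₗ[𝕜] F) (hg : Function.Injective g) : StrictConvexOn 𝕜 (g ⁻¹' s) (f ∘ g) :=
  ⟨hf.1.linear_preimage g, fun _ hx _ hy hxy _ _ ha hb hab => by
    simpa only [Function.comp, map_add, map_smul] using hf.2 hx hy (hg.ne hxy) ha hb hab⟩

theorem ConvexOn.perspective_le {f : ℝ → ℝ} {s : Set ℝ} (hf : ConvexOn ℝ s f)
    {a₁ a₂ b₁ b₂ θ θ' : ℝ} (hb₁ : 0 < b₁) (hb₂ : 0 < b₂) (h₁ : a₁ / b₁ ∈ s) (h₂ : a₂ / b₂ ∈ s)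
    (hθ : 0 ≤ θ) (hθ' : 0 ≤ θ') (hθθ' : θ + θ' = 1) :
    (θ * b₁ + θ' * b₂) * f ((θ * a₁ + θ' * a₂) / (θ * b₁ + θ' * b₂))
      ≤ θ * (b₁ * f (a₁ / b₁)) + θ' * (b₂ * f (a₂ / b₂)) := by
  have hb : 0 < θ * b₁ + θ' * b₂ := by simpa using convex_Ioi (0 : ℝ) hb₁ hb₂ hθ hθ' hθθ'
  calc _ = (θ * b₁ + θ' * b₂) * f ((θ * b₁ / (θ * b₁ + θ' * b₂)) • (a₁ / b₁)
          + (θ' * b₂ / (θ * b₁ + θ' * b₂)) • (a₂ / b₂)) := by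
        congr 2; simp only [smul_eq_mul]; field_simp
    _ ≤ (θ * b₁ + θ' * b₂) * ((θ * b₁ / (θ * b₁ + θ' * b₂)) • f (a₁ / b₁)
          + (θ' * b₂ / (θ * b₁ + θ' * b₂)) • f (a₂ / b₂)) := by
        gcongr
        exact hf.2 h₁ h₂ (by positivity) (by positivity) (by field_simp)
    _ = θ * (b₁ * f (a₁ / b₁)) + θ' * (b₂ * f (a₂ / b₂)) := by
        simp only [smul_eq_mul]; field_simp

theorem StrictConvexOn.perspective_lt {f : ℝ → ℝ} {s : Set ℝ} (hf : StrictConvexOn ℝ s f)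
    {a₁ a₂ b₁ b₂ θ θ' : ℝ} (hb₁ : 0 < b₁) (hb₂ : 0 < b₂) (h₁ : a₁ / b₁ ∈ s) (h₂ : a₂ / b₂ ∈ s)
    (hne : a₁ / b₁ ≠ a₂ / b₂) (hθ : 0 < θ) (hθ' : 0 < θ') :
    (θ * b₁ + θ' * b₂) * f ((θ * a₁ + θ' * a₂) / (θ * b₁ + θ' * b₂))
      < θ * (b₁ * f (a₁ / b₁)) + θ' * (b₂ * f (a₂ / b₂)) := by
  have hb : 0 < θ * b₁ + θ' * b₂ := by positivity
  calc _ = (θ * b₁ + θ' * b₂) * f ((θ * b₁ / (θ * b₁ + θ' * b₂)) • (a₁ / b₁)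
          + (θ' * b₂ / (θ * b₁ + θ' * b₂)) • (a₂ / b₂)) := by
        congr 2; simp only [smul_eq_mul]; field_simp
    _ < (θ * b₁ + θ' * b₂) * ((θ * b₁ / (θ * b₁ + θ' * b₂)) • f (a₁ / b₁)
          + (θ' * b₂ / (θ * b₁ + θ' * b₂)) • f (a₂ / b₂)) := by
        gcongr
        exact hf.2 h₁ h₂ hne (by positivity) (by positivity) (by field_simp)
    _ = θ * (b₁ * f (a₁ / b₁)) + θ' * (b₂ * f (a₂ / b₂)) := by
        simp only [smul_eq_mul]; field_simp

theorem mul_log_div_add_le {a₁ a₂ b₁ b₂ θ θ' : ℝ} (ha₁ : 0 ≤ a₁) (ha₂ : 0 ≤ a₂)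
    (hb₁ : 0 < b₁) (hb₂ : 0 < b₂) (hθ : 0 ≤ θ) (hθ' : 0 ≤ θ') (hθθ' : θ + θ' = 1) :
    (θ * a₁ + θ' * a₂) * log ((θ * a₁ + θ' * a₂) / (θ * b₁ + θ' * b₂))
      ≤ θ * (a₁ * log (a₁ / b₁)) + θ' * (a₂ * log (a₂ / b₂)) := by
  have hb : 0 < θ * b₁ + θ' * b₂ := by simpa using convex_Ioi (0 : ℝ) hb₁ hb₂ hθ hθ' hθθ'
  simpa only [← mul_assoc, mul_div_cancel₀ _ hb.ne', mul_div_cancel₀ _ hb₁.ne',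
    mul_div_cancel₀ _ hb₂.ne'] using convexOn_mul_log.perspective_le hb₁ hb₂
      (div_nonneg ha₁ hb₁.le) (div_nonneg ha₂ hb₂.le) hθ hθ' hθθ'

theorem mul_log_div_add_lt {a₁ a₂ b₁ b₂ θ θ' : ℝ} (ha₁ : 0 ≤ a₁) (ha₂ : 0 ≤ a₂)
    (hb₁ : 0 < b₁) (hb₂ : 0 < b₂) (hne : a₁ / b₁ ≠ a₂ / b₂) (hθ : 0 < θ) (hθ' : 0 < θ') :
    (θ * a₁ + θ' * a₂) * log ((θ * a₁ + θ' * a₂) / (θ * b₁ + θ' * b₂))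
      < θ * (a₁ * log (a₁ / b₁)) + θ' * (a₂ * log (a₂ / b₂)) := by
  have hb : 0 < θ * b₁ + θ' * b₂ := by positivity
  simpa only [← mul_assoc, mul_div_cancel₀ _ hb.ne', mul_div_cancel₀ _ hb₁.ne',
    mul_div_cancel₀ _ hb₂.ne'] using strictConvexOn_mul_log.perspective_lt hb₁ hb₂
      (div_nonneg ha₁ hb₁.le) (div_nonneg ha₂ hb₂.le) hne hθ hθ'

noncomputable def mixingEntropy {ι : Type*} [Fintype ι] (u : ι → ℝ) : ℝ :=
  ∑ i, u i * log (u i / ∑ j, u j)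

section MixingEntropy

variable {ι : Type*} [Fintype ι] {u w : ι → ℝ} {a b : ℝ}

theorem mixingEntropy_add_smul (a b : ℝ) (u w : ι → ℝ) :
    mixingEntropy (a • u + b • w)
      = ∑ i, (a * u i + b * w i) * log ((a * u i + b * w i) / (a * ∑ j, u j + b * ∑ j, w j)) := by
  simp only [mixingEntropy, Pi.add_apply, Pi.smul_apply, smul_eq_mul, sum_add_distrib, mul_sum]

theorem convexOn_mixingEntropy : ConvexOn ℝ {u : ι → ℝ | ∀ i, 0 < u i} mixingEntropy := by
  refine ⟨convex_setOf_forall_pos ι, fun u hu w hw a b ha hb hab => ?_⟩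
  rw [smul_eq_mul, smul_eq_mul, mixingEntropy_add_smul]
  conv_rhs => rw [mixingEntropy, mixingEntropy, mul_sum, mul_sum, ← sum_add_distrib]
  gcongr with i
  exact mul_log_div_add_le (hu i).le (hw i).le (sum_pos (fun j _ => hu j) ⟨i, mem_univ i⟩)
    (sum_pos (fun j _ => hw j) ⟨i, mem_univ i⟩) ha hb hab

theorem mixingEntropy_add_smul_lt (hu : ∀ i, 0 < u i) (hw : ∀ i, 0 < w i) (ha : 0 < a)
    (hb : 0 < b) (hab : a + b = 1) (hne : ∀ k : ℝ, u ≠ k • w) :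
    mixingEntropy (a • u + b • w) < a * mixingEntropy u + b * mixingEntropy w := by
  have hpos {v : ι → ℝ} (hv : ∀ i, 0 < v i) (i : ι) : 0 < ∑ j, v j :=
    sum_pos (fun j _ => hv j) ⟨i, mem_univ i⟩
  obtain ⟨i, hi⟩ : ∃ i, u i / ∑ j, u j ≠ w i / ∑ j, w j := by
    by_contra! h
    refine hne ((∑ j, u j) / ∑ j, w j) (funext fun i => ?_)
    have hU := (hpos hu i).ne'
    calc u i = (∑ j, u j) * (u i / ∑ j, u j) := (mul_div_cancel₀ _ hU).symm
      _ = _ := by rw [h i, Pi.smul_apply, smul_eq_mul]; ring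
  rw [mixingEntropy_add_smul]
  conv_rhs => rw [mixingEntropy, mixingEntropy, mul_sum, mul_sum, ← sum_add_distrib]
  refine sum_lt_sum (fun j _ => mul_log_div_add_le (hu j).le (hw j).le (hpos hu j) (hpos hw j)
    ha.le hb.le hab) ⟨i, mem_univ i, ?_⟩
  exact mul_log_div_add_lt (hu i).le (hw i).le (hpos hu i) (hpos hw i) hi ha hb

end MixingEntropy

theorem StrictConvexOn.comp_dotProduct_add_mixingEntropy {ι : Type*} [Fintype ι] {c : ι → ℝ}
    (hc : ∀ i, 0 < c i) {F : ℝ → ℝ} (hF : StrictConvexOn ℝ (Ioi 0) F) :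
    StrictConvexOn ℝ {u : ι → ℝ | ∀ i, 0 < u i} (fun u => F (c ⬝ᵥ u) + mixingEntropy u) := by
  refine ⟨convex_setOf_forall_pos ι, fun u hu w hw huw a b ha hb hab => ?_⟩
  rcases isEmpty_or_nonempty ι with hι | hι
  · exact absurd (Subsingleton.elim u w) huw
  have hc_pos {v : ι → ℝ} (hv : ∀ i, 0 < v i) : 0 < c ⬝ᵥ v :=
    sum_pos (fun i _ => mul_pos (hc i) (hv i)) univ_nonempty
  have hE := convexOn_mixingEntropy.2 hu hw ha.le hb.le hab
  have hFle := hF.convexOn.2 (hc_pos hu) (hc_pos hw) ha.le hb.le hab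
  simp only [smul_eq_mul, dotProduct_add, dotProduct_smul] at hE hFle ⊢
  by_cases hcuw : c ⬝ᵥ u = c ⬝ᵥ w
  · have hne (k : ℝ) : u ≠ k • w := by
      rintro rfl
      have hk : k * c ⬝ᵥ w = 1 * c ⬝ᵥ w := by simpa [dotProduct_smul] using hcuw
      exact huw (by rw [mul_right_cancel₀ (hc_pos hw).ne' hk, one_smul])
    linarith [mixingEntropy_add_smul_lt hu hw ha hb hab hne]
  · have hF_lt := hF.2 (hc_pos hu) (hc_pos hw) hcuw ha hb hab
    simp only [smul_eq_mul] at hF_lt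
    linarith

theorem mixture_freeEnergy_strictConvexOn_general
    (N : ℕ) (m vbar : Fin N → ℝ)
    (hm : ∀ i, 0 < m i) (hv : ∀ i, 0 < vbar i)
    (F : ℝ → ℝ) (hF : ContDiffOn ℝ 2 F (Set.Ioi 0))
    (hF'' : ∀ t : ℝ, 0 < t → 0 < deriv (deriv F) t) :
    StrictConvexOn ℝ {ρ : Fin N → ℝ | ∀ i, 0 < ρ i}
      (fun ρ => F (∑ i, (vbar i / m i) * ρ i)
        + ∑ i, (ρ i / m i) * Real.log ((ρ i / m i) / (∑ j, ρ j / m j))) := by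
  have hF_strict : StrictConvexOn ℝ (Ioi 0) F :=
    strictConvexOn_of_deriv2_pos (convex_Ioi 0) hF.continuousOn fun t ht => by
      simpa using hF'' t (by simpa using ht)
  let D : (Fin N → ℝ) →ₗ[ℝ] (Fin N → ℝ) :=
    { toFun := fun ρ i => ρ i / m i
      map_add' := fun _ _ => funext fun _ => add_div _ _ _
      map_smul' := fun _ _ => funext fun _ => mul_div_assoc _ _ _ }
  have hD : Function.Injective D := fun _ _ h =>
    funext fun i => (div_left_inj' (hm i).ne').1 (congr_fun h i)
  have hD_orthant : D ⁻¹' {u | ∀ i, 0 < u i} = {ρ | ∀ i, 0 < ρ i} :=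
    Set.ext fun ρ => forall_congr' fun i => div_pos_iff_of_pos_right (hm i)
  have h := (hF_strict.comp_dotProduct_add_mixingEntropy hv).comp_linearMap_of_injective D hD
  rw [hD_orthant] at h
  refine h.congr fun ρ _ => ?_
  simp only [Function.comp, dotProduct, mixingEntropy, D, LinearMap.coe_mk, AddHom.coe_mk,
    mul_div_assoc', div_mul_eq_mul_div]

/-- The free energy
`h(ρ) = F(Σ_i v_i ρ_i) + Σ_i n_i ln(n_i/n)` (with `v_i = v̄_i/m_i`, `n_i = ρ_i/m_i`,
`n = Σ_j n_j`), where `F` is `C²` on `(0,∞)` with `F'' > 0`, is strictly convex on the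
open positive orthant `ℝ^N_+`. -/
theorem mixture_freeEnergy_strictConvexOn
    (N : ℕ) (hN : 1 ≤ N) (m vbar : Fin N → ℝ)
    (hm : ∀ i, 0 < m i) (hv : ∀ i, 0 < vbar i)
    (F : ℝ → ℝ) (hF : ContDiffOn ℝ 2 F (Set.Ioi 0))
    (hF'' : ∀ t : ℝ, 0 < t → 0 < deriv (deriv F) t) :
    StrictConvexOn ℝ {ρ : Fin N → ℝ | ∀ i, 0 < ρ i}
      (fun ρ => F (∑ i, (vbar i / m i) * ρ i)
        + ∑ i, (ρ i / m i) * Real.log ((ρ i / m i) / (∑ j, ρ j / m j))) :=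
  mixture_freeEnergy_strictConvexOn_general N m vbar hm hv F hF hF''
end

section
/- Fix positive constants m_1, …, m_N and v̄_1, …, v̄_N and set v_i := v̄_i/m_i. Let F : (0, ∞) → ℝ be twice continuously differentiable with F″(t) > 0 for all t > 0 and F′(t) → −∞ as t → 0⁺. Define h on ℝ^N_+ by h(ρ) := F(Σ_i v_i ρ_i) + Σ_i n_i·ln(n_i/n) with n_i := ρ_i/m_i, n := Σ_j n_j; its partial derivatives are ∂h/∂ρ_i(ρ) = F′(v·ρ)·v_i + (1/m_i)·ln(n_i/n). Then for every sequence (ρ^k) in ℝ^N_+ converging to a point ρ̄ of the boundary of ℝ^N_+ (i.e. ρ̄_i ≥ 0 for all i and ρ̄_j = 0 for at least one j), the Euclidean norm of the gradient satisfies |∇h(ρ^k)| → +∞ as k → ∞. -/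
/-!
Write `g = ∇h` and `s = v·ρ`. If `ρ^k → 0`, then `Σ_i m_i g_i = F'(s) Σ_i m_i v_i + Σ_i ln(n_i/n)`,
and every `ln(n_i/n) ≤ 0` while `F'(s) → -∞`; so this weighted sum of the components tends
to `-∞`, which forces `|g| → ∞`. If `ρ^k → ρ̄ ≠ 0`, then `F'(s)` stays bounded (it converges to
`F'(v·ρ̄)`, as `v·ρ̄ > 0`), while `n_j/n → 0` for a coordinate with `ρ̄_j = 0`; so the single
component `g_j` tends to `-∞`.
-/

open Filter Topology Finset

section FiniteSums

variable {ι α : Type*} [Fintype ι] {l : Filter α}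

theorem abs_le_sqrt_sum_sq (g : ι → ℝ) (i : ι) : |g i| ≤ √(∑ j, g j ^ 2) :=
  Real.abs_le_sqrt (single_le_sum (fun j _ => sq_nonneg (g j)) (mem_univ i))

theorem tendsto_sqrt_sum_sq_atTop_of_apply {g : α → ι → ℝ} (i : ι)
    (h : Tendsto (fun k => g k i) l atBot) : Tendsto (fun k => √(∑ j, g k j ^ 2)) l atTop :=
  tendsto_atTop_mono (fun k => abs_le_sqrt_sum_sq (g k) i) (tendsto_abs_atBot_atTop.comp h)

theorem tendsto_sqrt_sum_sq_atTop_of_sum_mul {g : α → ι → ℝ} {w : ι → ℝ} (hw : ∀ i, 0 ≤ w i)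
    (h : Tendsto (fun k => ∑ i, w i * g k i) l atBot) :
    Tendsto (fun k => √(∑ j, g k j ^ 2)) l atTop := by
  set W := ∑ i, w i + 1
  have hW : 0 < W := add_pos_of_nonneg_of_pos (sum_nonneg fun i _ => hw i) one_pos
  have hbound : ∀ k, |∑ i, w i * g k i| / W ≤ √(∑ j, g k j ^ 2) := fun k => by
    rw [div_le_iff₀ hW]
    calc |∑ i, w i * g k i| ≤ ∑ i, w i * √(∑ j, g k j ^ 2) := by
          refine (abs_sum_le_sum_abs _ _).trans (sum_le_sum fun i _ => ?_)
          rw [abs_mul, abs_of_nonneg (hw i)]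
          exact mul_le_mul_of_nonneg_left (abs_le_sqrt_sum_sq (g k) i) (hw i)
      _ ≤ √(∑ j, g k j ^ 2) * W := by
          rw [← sum_mul, mul_comm]
          nlinarith [Real.sqrt_nonneg (∑ j, g k j ^ 2)]
  exact tendsto_atTop_mono hbound ((tendsto_abs_atBot_atTop.comp h).atTop_div_const hW)

theorem log_div_sum_nonpos {x : ι → ℝ} (hx : ∀ i, 0 ≤ x i) (i : ι) :
    Real.log (x i / ∑ j, x j) ≤ 0 :=
  Real.log_nonpos (div_nonneg (hx i) (sum_nonneg fun j _ => hx j))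
    (div_le_one_of_le₀ (single_le_sum (fun j _ => hx j) (mem_univ i))
      (sum_nonneg fun j _ => hx j))

theorem tendsto_log_div_sum_atBot {x : α → ι → ℝ} {x₀ : ι → ℝ} (hx : ∀ k i, 0 < x k i)
    (hlim : Tendsto x l (𝓝 x₀)) (hsum : ∑ i, x₀ i ≠ 0) {j : ι} (hj : x₀ j = 0) :
    Tendsto (fun k => Real.log (x k j / ∑ i, x k i)) l atBot := by
  have hshare : Tendsto (fun k => x k j / ∑ i, x k i) l (𝓝 0) := by
    have hsum_lim : Tendsto (fun k => ∑ i, x k i) l (𝓝 (∑ i, x₀ i)) :=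
      tendsto_finsetSum _ fun i _ => tendsto_pi_nhds.1 hlim i
    have hxj : Tendsto (fun k => x k j) l (𝓝 0) := hj ▸ tendsto_pi_nhds.1 hlim j
    rw [← zero_div (∑ i, x₀ i)]
    exact hxj.div hsum_lim hsum
  refine Real.tendsto_log_nhdsGT_zero.comp (tendsto_nhdsWithin_iff.2 ⟨hshare, ?_⟩)
  exact Eventually.of_forall fun k =>
    div_pos (hx k j) (sum_pos (fun i _ => hx k i) ⟨j, mem_univ j⟩)

end FiniteSums

section FreeEnergy

variable {ι α : Type*} [Fintype ι] {l : Filter α} {m v : ι → ℝ} {F' : ℝ → ℝ}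

/-- The gradient of `h(ρ) = F(v·ρ) + Σ_i n_i ln(n_i/n)`, `n_i = ρ_i/m_i`, with `F'` in place of
the derivative of `F`. -/
noncomputable def freeEnergyGrad (m v : ι → ℝ) (F' : ℝ → ℝ) (ρ : ι → ℝ) (i : ι) : ℝ :=
  F' (∑ j, v j * ρ j) * v i + (1 / m i) * Real.log ((ρ i / m i) / ∑ j, ρ j / m j)

theorem sum_mul_freeEnergyGrad_le (hm : ∀ i, 0 < m i) {ρ : ι → ℝ} (hρ : ∀ i, 0 ≤ ρ i) :
    ∑ i, m i * freeEnergyGrad m v F' ρ i ≤ F' (∑ j, v j * ρ j) * ∑ i, m i * v i := by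
  have hsplit : ∑ i, m i * freeEnergyGrad m v F' ρ i
      = F' (∑ j, v j * ρ j) * ∑ i, m i * v i
        + ∑ i, Real.log ((ρ i / m i) / ∑ j, ρ j / m j) := by
    rw [mul_sum, ← sum_add_distrib]
    refine sum_congr rfl fun i _ => ?_
    simp only [freeEnergyGrad]
    field_simp [(hm i).ne']
  have hlog : ∑ i, Real.log ((ρ i / m i) / ∑ j, ρ j / m j) ≤ 0 :=
    sum_nonpos fun i _ => log_div_sum_nonpos (fun j => div_nonneg (hρ j) (hm j).le) i
  linarith

theorem tendsto_sum_mul_freeEnergyGrad_atBot [Nonempty ι] (hm : ∀ i, 0 < m i)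
    (hv : ∀ i, 0 < v i) (hF' : Tendsto F' (𝓝[>] 0) atBot) {ρ : α → ι → ℝ}
    (hpos : ∀ k i, 0 < ρ k i) (hlim : Tendsto ρ l (𝓝 0)) :
    Tendsto (fun k => ∑ i, m i * freeEnergyGrad m v F' (ρ k) i) l atBot := by
  have hs : Tendsto (fun k => ∑ j, v j * ρ k j) l (𝓝[>] 0) := by
    refine tendsto_nhdsWithin_iff.2 ⟨?_, Eventually.of_forall fun k =>
      sum_pos (fun j _ => mul_pos (hv j) (hpos k j)) univ_nonempty⟩
    simpa using tendsto_finsetSum _ fun j _ => (tendsto_pi_nhds.1 hlim j).const_mul (v j)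
  have hC : 0 < ∑ i, m i * v i := sum_pos (fun i _ => mul_pos (hm i) (hv i)) univ_nonempty
  exact tendsto_atBot_mono (fun k => sum_mul_freeEnergyGrad_le hm fun i => (hpos k i).le)
    ((hF'.comp hs).atBot_mul_const hC)

theorem tendsto_freeEnergyGrad_apply_atBot (hm : ∀ i, 0 < m i) (hv : ∀ i, 0 < v i)
    (hF' : ContinuousOn F' (Set.Ioi 0)) {ρ₀ : ι → ℝ} (hρ₀ : ∀ i, 0 ≤ ρ₀ i) (hne : ρ₀ ≠ 0)
    {j : ι} (hj : ρ₀ j = 0) {ρ : α → ι → ℝ} (hpos : ∀ k i, 0 < ρ k i)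
    (hlim : Tendsto ρ l (𝓝 ρ₀)) :
    Tendsto (fun k => freeEnergyGrad m v F' (ρ k) j) l atBot := by
  obtain ⟨i₀, hi₀⟩ := Function.ne_iff.1 hne
  have hρi₀ : 0 < ρ₀ i₀ := (hρ₀ i₀).lt_of_ne' hi₀
  have hs₀ : 0 < ∑ i, v i * ρ₀ i :=
    sum_pos' (fun i _ => mul_nonneg (hv i).le (hρ₀ i)) ⟨i₀, mem_univ _, mul_pos (hv i₀) hρi₀⟩
  have hn₀ : ∑ i, ρ₀ i / m i ≠ 0 := (sum_pos' (fun i _ => div_nonneg (hρ₀ i) (hm i).le)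
    ⟨i₀, mem_univ _, div_pos hρi₀ (hm i₀)⟩).ne'
  have hF's : Tendsto (fun k => F' (∑ i, v i * ρ k i)) l (𝓝 (F' (∑ i, v i * ρ₀ i))) :=
    (hF'.continuousAt (Ioi_mem_nhds hs₀)).tendsto.comp
      (tendsto_finsetSum _ fun i _ => (tendsto_pi_nhds.1 hlim i).const_mul (v i))
  have hlog : Tendsto (fun k => Real.log ((ρ k j / m j) / ∑ i, ρ k i / m i)) l atBot :=
    tendsto_log_div_sum_atBot (x₀ := fun i => ρ₀ i / m i)
      (fun k i => div_pos (hpos k i) (hm i))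
      (tendsto_pi_nhds.2 fun i => (tendsto_pi_nhds.1 hlim i).div_const (m i)) hn₀
      (by simp [hj])
  exact (hF's.mul_const (v j)).add_atBot (hlog.const_mul_atBot (one_div_pos.2 (hm j)))

end FreeEnergy

theorem mixture_freeEnergy_gradient_blowup_general
    (N : ℕ) (m vbar : Fin N → ℝ)
    (hm : ∀ i, 0 < m i) (hv : ∀ i, 0 < vbar i)
    (F : ℝ → ℝ) (hF : ContDiffOn ℝ 2 F (Set.Ioi 0))
    (hF' : Tendsto (deriv F) (nhdsWithin 0 (Set.Ioi 0)) atBot) :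
    ∀ ρbar : Fin N → ℝ, (∀ i, 0 ≤ ρbar i) → (∃ j, ρbar j = 0) →
      ∀ ρk : ℕ → Fin N → ℝ, (∀ k i, 0 < ρk k i) →
        Tendsto ρk atTop (nhds ρbar) →
        Tendsto (fun k =>
            Real.sqrt (∑ i,
              (deriv F (∑ j, (vbar j / m j) * ρk k j) * (vbar i / m i)
                + (1 / m i) * Real.log ((ρk k i / m i) / (∑ j, ρk k j / m j))) ^ 2))
          atTop atTop := by
  rintro ρbar hρbar ⟨j, hj⟩ ρk hpos hlim
  have : Nonempty (Fin N) := ⟨j⟩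
  have hv' : ∀ i, 0 < vbar i / m i := fun i => div_pos (hv i) (hm i)
  change Tendsto (fun k => √(∑ i,
    freeEnergyGrad m (fun i => vbar i / m i) (deriv F) (ρk k) i ^ 2)) atTop atTop
  rcases eq_or_ne ρbar 0 with rfl | hne
  · exact tendsto_sqrt_sum_sq_atTop_of_sum_mul (fun i => (hm i).le)
      (tendsto_sum_mul_freeEnergyGrad_atBot hm hv' hF' hpos hlim)
  · exact tendsto_sqrt_sum_sq_atTop_of_apply j
      (tendsto_freeEnergyGrad_apply_atBot hm hv'
        (hF.continuousOn_deriv_of_isOpen isOpen_Ioi one_le_two) hρbar hne hj hpos hlim)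

/-- For the free energy
`h(ρ) = F(Σ_i v_i ρ_i) + Σ_i n_i ln(n_i/n)` with `F` of class `C²` on `(0,∞)`, `F'' > 0`
and `F'(t) → −∞` as `t → 0⁺`, whose partial derivatives are
`∂h/∂ρ_i(ρ) = F'(v·ρ)·v_i + (1/m_i) ln(n_i/n)`, the Euclidean norm of the gradient blows up
along every sequence of interior points converging to a boundary point of `ℝ^N_+`. -/
theorem mixture_freeEnergy_gradient_blowup
    (N : ℕ) (hN : 1 ≤ N) (m vbar : Fin N → ℝ)
    (hm : ∀ i, 0 < m i) (hv : ∀ i, 0 < vbar i)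
    (F : ℝ → ℝ) (hF : ContDiffOn ℝ 2 F (Set.Ioi 0))
    (hF'' : ∀ t : ℝ, 0 < t → 0 < deriv (deriv F) t)
    (hF' : Tendsto (deriv F) (nhdsWithin 0 (Set.Ioi 0)) atBot) :
    ∀ ρbar : Fin N → ℝ, (∀ i, 0 ≤ ρbar i) → (∃ j, ρbar j = 0) →
      ∀ ρk : ℕ → Fin N → ℝ, (∀ k i, 0 < ρk k i) →
        Tendsto ρk atTop (nhds ρbar) →
        Tendsto (fun k =>
            Real.sqrt (∑ i,
              (deriv F (∑ j, (vbar j / m j) * ρk k j) * (vbar i / m i)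
                + (1 / m i) * Real.log ((ρk k i / m i) / (∑ j, ρk k j / m j))) ^ 2))
          atTop atTop :=
  mixture_freeEnergy_gradient_blowup_general N m vbar hm hv F hF hF'
end
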